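/- Let A be a sequential vset-automaton with state set Q and transition relation δ that is semi-functional for a set Y ⊆ Vars(A), and let x ∈ Vars(A)∖Y. Then there exists a sequential vset-automaton A′ that is equivalent to A (i.e., ⟦A′⟧(d) = ⟦A⟧(d) for every document d), is semi-functional for Y ∪ {x}, and has at most 2|Q| states and at most 2|δ| transitions. -/

import Mathlib

namespace Spanners

open scoped Classical

/-! ### Spans and mappings -/

abbrev Span := ℕ × ℕ

abbrev VMapping := ℕ → Option Span

def emptyMapping : VMapping := fun _ => none

def mapDom (μ : VMapping) : Set ℕ := {x | μ x ≠ none}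

/-- Two mappings are compatible if they agree on every common variable. -/
def Compatible (μ1 μ2 : VMapping) : Prop :=
  ∀ x s1 s2, μ1 x = some s1 → μ2 x = some s2 → s1 = s2

def DisjointDom (μ1 μ2 : VMapping) : Prop :=
  ∀ x, μ1 x = none ∨ μ2 x = none

def munion (μ1 μ2 : VMapping) : VMapping := fun x =>
  match μ1 x with
  | some s => some s
  | none => μ2 x

def minsert (x : ℕ) (s : Span) (μ : VMapping) : VMapping :=
  fun y => if y = x then some s else μ y

/-- Natural join of two sets of mappings. -/
def joinSet (S1 S2 : Set VMapping) : Set VMapping :=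
  {μ | ∃ μ1 ∈ S1, ∃ μ2 ∈ S2, Compatible μ1 μ2 ∧ μ = munion μ1 μ2}

/-- Difference of two sets of mappings. -/
def diffSet (S1 S2 : Set VMapping) : Set VMapping :=
  {μ1 | μ1 ∈ S1 ∧ ∀ μ2 ∈ S2, ¬ Compatible μ1 μ2}

/-- Restriction of a mapping to a set of variables. -/
noncomputable def restrictMap (μ : VMapping) (V : Set ℕ) : VMapping :=
  fun x => if x ∈ V then μ x else none

/-- Projection of a set of mappings to a set of variables. -/
def projSet (V : Set ℕ) (S : Set VMapping) : Set VMapping :=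
  {μ' | ∃ μ ∈ S, μ' = restrictMap μ V}

/-! ### Regex formulas -/

inductive RGX (Sig : Type) where
  | empty : RGX Sig
  | eps : RGX Sig
  | letter : Sig → RGX Sig
  | union : RGX Sig → RGX Sig → RGX Sig
  | concat : RGX Sig → RGX Sig → RGX Sig
  | star : RGX Sig → RGX Sig
  | bind : ℕ → RGX Sig → RGX Sig

variable {Sig : Type}

def RGX.vars : RGX Sig → Finset ℕ
  | .empty => ∅
  | .eps => ∅
  | .letter _ => ∅
  | .union a b => a.vars ∪ b.vars
  | .concat a b => a.vars ∪ b.vars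
  | .star a => a.vars
  | .bind x a => insert x a.vars

def RGX.size : RGX Sig → ℕ
  | .empty => 1
  | .eps => 1
  | .letter _ => 1
  | .union a b => a.size + b.size + 1
  | .concat a b => a.size + b.size + 1
  | .star a => a.size + 1
  | .bind _ a => a.size + 1

/-- The schemaless semantics `⟨α⟩(d)`: `RMatch α d i j μ` means `([i,j⟩, μ) ∈ ⟨α⟩(d)`. -/
inductive RMatch : RGX Sig → List Sig → ℕ → ℕ → VMapping → Prop where
  | eps {d : List Sig} {i : ℕ} (h1 : 1 ≤ i) (h2 : i ≤ d.length + 1) :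
      RMatch .eps d i i emptyMapping
  | letter {d : List Sig} {i : ℕ} {σ : Sig} (h1 : 1 ≤ i) (h2 : d[i - 1]? = some σ) :
      RMatch (.letter σ) d i (i + 1) emptyMapping
  | unionL {a b : RGX Sig} {d : List Sig} {i j : ℕ} {μ : VMapping}
      (h : RMatch a d i j μ) : RMatch (.union a b) d i j μ
  | unionR {a b : RGX Sig} {d : List Sig} {i j : ℕ} {μ : VMapping}
      (h : RMatch b d i j μ) : RMatch (.union a b) d i j μ
  | concat {a b : RGX Sig} {d : List Sig} {i k j : ℕ} {μ1 μ2 : VMapping}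
      (h1 : RMatch a d i k μ1) (h2 : RMatch b d k j μ2) (hd : DisjointDom μ1 μ2) :
      RMatch (.concat a b) d i j (munion μ1 μ2)
  | bind {x : ℕ} {a : RGX Sig} {d : List Sig} {i j : ℕ} {μ : VMapping}
      (h : RMatch a d i j μ) (hx : μ x = none) :
      RMatch (.bind x a) d i j (minsert x (i, j) μ)
  | starNil {a : RGX Sig} {d : List Sig} {i : ℕ} (h1 : 1 ≤ i) (h2 : i ≤ d.length + 1) :
      RMatch (.star a) d i i emptyMapping
  | starCons {a : RGX Sig} {d : List Sig} {i k j : ℕ} {μ1 μ2 : VMapping}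
      (h1 : RMatch a d i k μ1) (h2 : RMatch (.star a) d k j μ2) (hd : DisjointDom μ1 μ2) :
      RMatch (.star a) d i j (munion μ1 μ2)

/-- `⟦α⟧(d)`: mappings extracted with the full span. -/
def rgxSem (α : RGX Sig) (d : List Sig) : Set VMapping :=
  {μ | RMatch α d 1 (d.length + 1) μ}

/-- Sequential regex formulas. -/
def RGX.Sequential : RGX Sig → Prop
  | .empty => True
  | .eps => True
  | .letter _ => True
  | .union a b => a.Sequential ∧ b.Sequential
  | .concat a b => a.Sequential ∧ b.Sequential ∧ Disjoint a.vars b.vars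
  | .star a => a.Sequential ∧ a.vars = ∅
  | .bind x a => a.Sequential ∧ x ∉ a.vars

/-- Variable-free words over the alphabet (built from ε, letters and concatenation). -/
inductive RGX.IsWord : RGX Sig → Prop where
  | eps : RGX.IsWord .eps
  | letter (σ : Sig) : RGX.IsWord (.letter σ)
  | concat {a b : RGX Sig} : a.IsWord → b.IsWord → RGX.IsWord (.concat a b)

/-- Functional for a set `V` of variables. -/
inductive FunctionalFor : RGX Sig → Finset ℕ → Prop where
  | word {α : RGX Sig} (h : α.IsWord) : FunctionalFor α ∅
  | union {a b : RGX Sig} {V : Finset ℕ} (ha : FunctionalFor a V) (hb : FunctionalFor b V) :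
      FunctionalFor (.union a b) V
  | concat {a b : RGX Sig} {V : Finset ℕ} (V1 : Finset ℕ) (hsub : V1 ⊆ V)
      (ha : FunctionalFor a V1) (hb : FunctionalFor b (V \ V1)) :
      FunctionalFor (.concat a b) V
  | star {a : RGX Sig} (h : FunctionalFor a ∅) : FunctionalFor (.star a) ∅
  | bind {x : ℕ} {a : RGX Sig} {V : Finset ℕ} (h : FunctionalFor a (V.erase x)) :
      FunctionalFor (.bind x a) V

def RGX.Functional (α : RGX Sig) : Prop := FunctionalFor α α.vars

/-- Disjunctive functional regex formulas: finite disjunctions of functional regex formulas. -/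
inductive DisjFunctional : RGX Sig → Prop where
  | base {γ : RGX Sig} (h : γ.Functional) : DisjFunctional γ
  | union {a b : RGX Sig} (ha : DisjFunctional a) (hb : DisjFunctional b) :
      DisjFunctional (.union a b)

/-- Number of disjuncts of a (disjunctive) regex formula. -/
def countDisjuncts : RGX Sig → ℕ
  | .union a b => countDisjuncts a + countDisjuncts b
  | _ => 1

/-- Disjunction-free regex formulas. -/
def RGX.DisjFree : RGX Sig → Prop
  | .union _ _ => False
  | .concat a b => a.DisjFree ∧ b.DisjFree
  | .star a => a.DisjFree
  | .bind _ a => a.DisjFree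
  | _ => True

/-- `γ` is synchronized for `x`: no subformula `γ1 ∨ γ2` contains `x`. -/
def RGX.SyncFor : RGX Sig → ℕ → Prop
  | .union a b, x => (x ∉ a.vars ∧ x ∉ b.vars) ∧ a.SyncFor x ∧ b.SyncFor x
  | .concat a b, x => a.SyncFor x ∧ b.SyncFor x
  | .star a, x => a.SyncFor x
  | .bind _ a, x => a.SyncFor x
  | _, _ => True

/-- Concatenation of a list of regex formulas. -/
def concatList : List (RGX Sig) → RGX Sig
  | [] => .eps
  | [α] => α
  | α :: rest => .concat α (concatList rest)

/-- Disjunction of a list of regex formulas. -/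
def disjList : List (RGX Sig) → RGX Sig
  | [] => .empty
  | [α] => α
  | α :: rest => .union α (disjList rest)

/-! ### vset-automata -/

inductive VLabel (Sig : Type) where
  | eps : VLabel Sig
  | letter : Sig → VLabel Sig
  | openv : ℕ → VLabel Sig
  | closev : ℕ → VLabel Sig
deriving DecidableEq

structure VA (Sig : Type) [DecidableEq Sig] where
  q0 : ℕ
  F : Finset ℕ
  δ : Finset (ℕ × VLabel Sig × ℕ)

variable [DecidableEq Sig]

/-- The states of a VA: the initial state and all states mentioned in `F` or in transitions. -/
def statesOf (A : VA Sig) : Finset ℕ :=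
  insert A.q0 (A.F ∪ A.δ.image (fun t => t.1) ∪ A.δ.image (fun t => t.2.2))

def labelVars : VLabel Sig → Finset ℕ
  | .openv x => {x}
  | .closev x => {x}
  | _ => ∅

/-- `Vars(A)`: the variables mentioned in the transitions of `A`. -/
def varsOf (A : VA Sig) : Finset ℕ := A.δ.biUnion (fun t => labelVars t.2.1)

/-- Total size of a VA: number of states plus number of transitions. -/
def vaSize (A : VA Sig) : ℕ := (statesOf A).card + A.δ.card

/-- `A.PathFrom p ls q`: a path (run segment) from `p` to `q` with label sequence `ls`. -/
inductive VA.PathFrom (A : VA Sig) : ℕ → List (VLabel Sig) → ℕ → Prop where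
  | nil (q : ℕ) : VA.PathFrom A q [] q
  | cons {p q r : ℕ} {l : VLabel Sig} {ls : List (VLabel Sig)}
      (h : (p, l, q) ∈ A.δ) (htail : VA.PathFrom A q ls r) : VA.PathFrom A p (l :: ls) r

/-- The word (document) read by a sequence of labels. -/
def readWord : List (VLabel Sig) → List Sig :=
  List.filterMap fun l => match l with
    | VLabel.letter σ => some σ
    | _ => none

def isLetterL : VLabel Sig → Bool
  | .letter _ => true
  | _ => false

/-- The current position in the document just before executing the `k`-th label. -/
def posAt (ls : List (VLabel Sig)) (k : ℕ) : ℕ := 1 + (ls.take k).countP isLetterL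

/-- Validity of a run, given by its label sequence. -/
def ValidLabels (ls : List (VLabel Sig)) : Prop :=
  ∀ x : ℕ,
    ls.count (VLabel.openv x) ≤ 1 ∧
    ls.count (VLabel.closev x) ≤ 1 ∧
    ((VLabel.openv x) ∈ ls ↔ (VLabel.closev x) ∈ ls) ∧
    ∀ i j : ℕ, ls[i]? = some (VLabel.openv x) → ls[j]? = some (VLabel.closev x) →
      posAt ls i ≤ posAt ls j

/-- The mapping `μ_ρ` extracted from a (valid accepting) run with label sequence `ls`. -/
def runMapping (ls : List (VLabel Sig)) : VMapping := fun x =>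
  if (VLabel.openv x) ∈ ls then
    some (posAt ls (ls.idxOf (VLabel.openv x)), posAt ls (ls.idxOf (VLabel.closev x)))
  else none

/-- `ls` is the label sequence of an accepting run of `A`. -/
def AcceptsWith (A : VA Sig) (ls : List (VLabel Sig)) : Prop :=
  ∃ qf, VA.PathFrom A A.q0 ls qf ∧ qf ∈ A.F

/-- `⟦A⟧(d)`. -/
def vaSem (A : VA Sig) (d : List Sig) : Set VMapping :=
  {μ | ∃ ls, AcceptsWith A ls ∧ readWord ls = d ∧ ValidLabels ls ∧ μ = runMapping ls}

/-- A VA is sequential if all of its accepting runs are valid. -/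
def VA.Sequential (A : VA Sig) : Prop := ∀ ls, AcceptsWith A ls → ValidLabels ls

/-- A run from the initial state to `q` that is a prefix of an accepting run. -/
def PrefixRun (A : VA Sig) (ls : List (VLabel Sig)) (q : ℕ) : Prop :=
  VA.PathFrom A A.q0 ls q ∧ ∃ ls' qf, VA.PathFrom A q ls' qf ∧ qf ∈ A.F

/-- `A` is semi-functional for the variable `x`: no state has extended configuration `d`. -/
def SemiFunctionalFor (A : VA Sig) (x : ℕ) : Prop :=
  ¬ ∃ q ls1 ls2, PrefixRun A ls1 q ∧ PrefixRun A ls2 q ∧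
      (VLabel.closev x) ∈ ls1 ∧ (VLabel.openv x) ∉ ls2

def SemiFunctionalForSet (A : VA Sig) (X : Finset ℕ) : Prop :=
  ∀ x ∈ X, SemiFunctionalFor A x

/-- Functional VA: sequential, and every accepting run opens and closes every variable. -/
def FunctionalVA (A : VA Sig) : Prop :=
  A.Sequential ∧ ∀ ls, AcceptsWith A ls → ∀ x ∈ varsOf A,
    (VLabel.openv x) ∈ ls ∧ (VLabel.closev x) ∈ ls

/-- `l` has a unique target state in `A`. -/
def UniqueTarget (A : VA Sig) (l : VLabel Sig) : Prop :=
  ∃ qt : ℕ, ∀ p q : ℕ, (p, l, q) ∈ A.δ → q = qt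

/-- `A` is synchronized for the variable `x`. -/
def SyncForVA (A : VA Sig) (x : ℕ) : Prop :=
  UniqueTarget A (VLabel.openv x) ∧ UniqueTarget A (VLabel.closev x) ∧
    ((∀ ls, AcceptsWith A ls → (VLabel.openv x) ∈ ls ∧ (VLabel.closev x) ∈ ls) ∨
     (∀ ls, AcceptsWith A ls → (VLabel.openv x) ∉ ls ∧ (VLabel.closev x) ∉ ls))

/-- `A` is the disjunctive functional VA with functional components `parts`. -/
def DisjFunctionalVAWith (A : VA Sig) (parts : List (VA Sig)) : Prop :=
  (∀ B ∈ parts, FunctionalVA B) ∧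
  (parts.Pairwise fun B C => Disjoint (statesOf B) (statesOf C)) ∧
  (∀ B ∈ parts, A.q0 ∉ statesOf B) ∧
  A.F = parts.foldr (fun B s => B.F ∪ s) (∅ : Finset ℕ) ∧
  A.δ = (parts.map (fun B => (A.q0, (VLabel.eps : VLabel Sig), B.q0))).toFinset
        ∪ parts.foldr (fun B s => B.δ ∪ s) (∅ : Finset (ℕ × VLabel Sig × ℕ))

def DisjFunctionalVA (A : VA Sig) : Prop := ∃ parts, DisjFunctionalVAWith A parts

/-! ### 3CNF formulas -/

/-- A 3CNF clause over `n` Boolean variables: a triple of literals; `(i, true)` is `xᵢ`,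
`(i, false)` is `¬xᵢ`. -/
def Clause3 (n : ℕ) : Type := (Fin n × Bool) × (Fin n × Bool) × (Fin n × Bool)

def litsOf {n : ℕ} (c : Clause3 n) : List (Fin n × Bool) := [c.1, c.2.1, c.2.2]

def clauseSat {n : ℕ} (τ : Fin n → Bool) (c : Clause3 n) : Prop :=
  ∃ l ∈ litsOf c, τ l.1 = l.2

def Sat3 {n m : ℕ} (φ : Fin m → Clause3 n) : Prop :=
  ∃ τ : Fin n → Bool, ∀ j, clauseSat τ (φ j)

end Spanners

namespace Spanners

variable {Sig : Type} [DecidableEq Sig]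

/-!
Take two copies of the states of `A`: `q` ("`x` not opened yet") and `q + N` ("`x` opened").
Transitions not mentioning `x` are kept in both copies; a transition labelled by `x` (either
label) becomes an opening of `x` from the lower into the upper copy and a closing of `x` inside
the upper copy. A run of the new automaton projects to a run of `A` whose labels agree with it
once the two labels of `x` are identified. As `A` is sequential, that run carries no label of `x`
or exactly two, so the new run is the same run with `x` opened before it is closed; validity and
the extracted mapping are unchanged (if `A` closes `x` before opening it, validity forces both to
happen at the same position). Conversely every valid accepting run of `A` lifts. Lower states
are reached only by runs without `x`, upper ones only by runs that opened `x`, so no state has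
configuration `d` for `x`; for the other variables projection preserves labels, so
semi-functionality is inherited from `A`.
-/

set_option linter.unusedSectionVars false

section Lists

variable {α : Type*}

theorem exists_eq_append_cons_of_countP_eq_succ {p : α → Bool} {l : List α} {n : ℕ}
    (h : l.countP p = n + 1) :
    ∃ u a w, l = u ++ a :: w ∧ (∀ b ∈ u, p b = false) ∧ p a ∧ w.countP p = n := by
  obtain ⟨a, ha⟩ : ∃ a, l.find? p = some a :=
    Option.isSome_iff_exists.mp (List.find?_isSome.mpr (List.countP_pos_iff.mp (by omega)))
  obtain ⟨hpa, u, w, rfl, hu⟩ := List.find?_eq_some_iff_append.mp ha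
  have hu' : ∀ b ∈ u, p b = false := by simpa using hu
  refine ⟨u, a, w, rfl, hu', hpa, ?_⟩
  rw [List.countP_append, List.countP_eq_zero.mpr (by simpa using hu'), List.countP_cons,
    if_pos hpa] at h
  omega

theorem eq_length_of_getElem?_append_cons_eq_some {u w : List α} {a b : α} {i : ℕ}
    (h : (u ++ a :: w)[i]? = some b) (hu : b ∉ u) (hw : b ∉ w) : i = u.length := by
  rw [List.getElem?_append] at h
  split_ifs at h with hi
  · exact absurd (List.mem_of_getElem? h) hu
  · obtain ⟨k, hk⟩ : ∃ k, i - u.length = k := ⟨_, rfl⟩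
    rcases k with _ | k
    · omega
    · rw [hk, List.getElem?_cons_succ] at h
      exact absurd (List.mem_of_getElem? h) hw

theorem append_cons_append_cons (u v w : List α) (a b : α) :
    u ++ a :: (v ++ b :: w) = (u ++ a :: v) ++ b :: w := by
  simp

variable {f : α → α} {b : α}

theorem mem_map_of_fiber_eq (hf : ∀ a, f a = b ↔ a = b) (l : List α) :
    b ∈ l.map f ↔ b ∈ l := by
  simp only [List.mem_map, hf, exists_eq_right]

theorem getElem?_map_eq_some_of_fiber_eq (hf : ∀ a, f a = b ↔ a = b) (l : List α) (i : ℕ) :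
    (l.map f)[i]? = some b ↔ l[i]? = some b := by
  simp only [List.getElem?_map, Option.map_eq_some_iff, hf, exists_eq_right]

variable [DecidableEq α]

theorem idxOf_append_cons_of_not_mem {u w : List α} {a : α} (h : a ∉ u) :
    (u ++ a :: w).idxOf a = u.length := by
  rw [List.idxOf_append_of_notMem h, List.idxOf_cons_self, add_zero]

theorem count_map_of_fiber_eq (hf : ∀ a, f a = b ↔ a = b) (l : List α) :
    (l.map f).count b = l.count b := by
  simp only [List.count_eq_countP, List.countP_map]
  exact List.countP_congr fun a _ => by simpa using hf a

theorem idxOf_map_of_fiber_eq (hf : ∀ a, f a = b ↔ a = b) (l : List α) :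
    (l.map f).idxOf b = l.idxOf b := by
  induction l with
  | nil => rfl
  | cons a l ih =>
    by_cases ha : a = b
    · subst ha
      simp [List.idxOf_cons_self, (hf a).mpr rfl]
    · rw [List.map_cons, List.idxOf_cons_ne _ (mt (hf a).mp ha), List.idxOf_cons_ne _ ha, ih]

end Lists

section Labels

variable {x y : ℕ} {l l' : VLabel Sig} {ls ls₀ u v w : List (VLabel Sig)}

theorem mem_labelVars_iff : x ∈ labelVars l ↔ l = .openv x ∨ l = .closev x := by
  cases l <;> simp [labelVars, eq_comm]

def VarFree (x : ℕ) (ls : List (VLabel Sig)) : Prop := ∀ l ∈ ls, x ∉ labelVars l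

theorem VarFree.openv_not_mem (h : VarFree x ls) : .openv x ∉ ls :=
  fun hm => h _ hm (by simp [labelVars])

theorem VarFree.closev_not_mem (h : VarFree x ls) : .closev x ∉ ls :=
  fun hm => h _ hm (by simp [labelVars])

def numVarLabels (x : ℕ) (ls : List (VLabel Sig)) : ℕ := ls.countP fun l => x ∈ labelVars l

theorem numVarLabels_eq_zero_iff : numVarLabels x ls = 0 ↔ VarFree x ls := by
  simp [numVarLabels, VarFree, List.countP_eq_zero]

theorem numVarLabels_append : numVarLabels x (u ++ v) = numVarLabels x u + numVarLabels x v :=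
  List.countP_append

theorem numVarLabels_openv_cons : numVarLabels x (.openv x :: ls) = numVarLabels x ls + 1 := by
  simp [numVarLabels, labelVars]

theorem numVarLabels_eq_count_add_count :
    numVarLabels x ls = ls.count (.openv x) + ls.count (.closev x) := by
  induction ls with
  | nil => rfl
  | cons l ls ih =>
    simp only [numVarLabels, List.countP_cons, List.count_cons] at ih ⊢
    rw [ih]
    rcases l <;> simp [labelVars] <;> split_ifs <;> omega

theorem exists_eq_append_of_numVarLabels_eq_two (h : numVarLabels x ls = 2) :
    ∃ u a v b w, ls = u ++ a :: (v ++ b :: w) ∧ VarFree x u ∧ VarFree x v ∧ VarFree x w ∧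
      x ∈ labelVars a ∧ x ∈ labelVars b := by
  obtain ⟨u, a, r, rfl, hu, ha, hr⟩ := exists_eq_append_cons_of_countP_eq_succ h
  obtain ⟨v, b, w, rfl, hv, hb, hw⟩ := exists_eq_append_cons_of_countP_eq_succ hr
  refine ⟨u, a, v, b, w, rfl, fun l hl => ?_, fun l hl => ?_, ?_, by simpa using ha,
    by simpa using hb⟩
  · simpa using hu l hl
  · simpa using hv l hl
  · exact numVarLabels_eq_zero_iff.mp hw

def collapseVar (x : ℕ) (l : VLabel Sig) : VLabel Sig := if x ∈ labelVars l then .openv x else l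

theorem collapseVar_of_not_mem (h : x ∉ labelVars l) : collapseVar x l = l := if_neg h

theorem collapseVar_eq_iff (h : x ∉ labelVars l') : collapseVar x l = l' ↔ l = l' := by
  unfold collapseVar
  split_ifs with hl
  · exact ⟨fun h' => absurd (h' ▸ by simp [labelVars]) h, fun h' => absurd (h' ▸ hl) h⟩
  · rfl

theorem collapseVar_eq_openv_self_iff : collapseVar x l = .openv x ↔ x ∈ labelVars l := by
  unfold collapseVar
  split_ifs with hl
  · simpa using hl
  · exact iff_of_false (fun h => hl (h ▸ by simp [labelVars])) hl

@[simp]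
theorem collapseVar_openv_self : collapseVar x (.openv x : VLabel Sig) = .openv x :=
  collapseVar_eq_openv_self_iff.mpr (by simp [labelVars])

@[simp]
theorem collapseVar_closev_self : collapseVar x (.closev x : VLabel Sig) = .openv x :=
  collapseVar_eq_openv_self_iff.mpr (by simp [labelVars])

theorem mem_labelVars_collapseVar : x ∈ labelVars (collapseVar x l) ↔ x ∈ labelVars l := by
  unfold collapseVar
  split_ifs with hl
  · simpa [labelVars] using hl
  · rfl

theorem map_collapseVar_of_varFree (h : VarFree x ls) : ls.map (collapseVar x) = ls :=
  List.map_congr_left (fun l hl => collapseVar_of_not_mem (h l hl)) |>.trans ls.map_id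

theorem numVarLabels_map_collapseVar :
    numVarLabels x (ls.map (collapseVar x)) = numVarLabels x ls := by
  simp only [numVarLabels, List.countP_map]
  exact List.countP_congr fun l _ => by simp [mem_labelVars_collapseVar]

theorem eq_of_map_collapseVar_eq (h : VarFree x u) (h' : ls.map (collapseVar x) = u) :
    ls = u := by
  have hls : VarFree x ls := by
    rw [← numVarLabels_eq_zero_iff, ← numVarLabels_map_collapseVar, h']
    exact numVarLabels_eq_zero_iff.mpr h
  rwa [map_collapseVar_of_varFree hls] at h'

theorem readWord_map_collapseVar : readWord (ls.map (collapseVar x)) = readWord ls := by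
  unfold readWord
  rw [List.filterMap_map]
  refine List.filterMap_congr fun l _ => ?_
  rcases l <;> simp [collapseVar, labelVars] <;> split_ifs <;> rfl

theorem posAt_map_collapseVar (k : ℕ) : posAt (ls.map (collapseVar x)) k = posAt ls k := by
  unfold posAt
  rw [← List.map_take, List.countP_map]
  congr 1
  refine List.countP_congr fun l _ => ?_
  rcases l <;> simp [collapseVar, labelVars, isLetterL] <;> split_ifs <;> simp

theorem posAt_mono (ls : List (VLabel Sig)) {i j : ℕ} (h : i ≤ j) : posAt ls i ≤ posAt ls j := by
  unfold posAt
  exact Nat.add_le_add_left (List.take_sublist_take_left h).countP_le 1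

end Labels

section Validity

variable {x y : ℕ} {ls ls₀ u v w : List (VLabel Sig)}

-- `ValidLabels ls` unfolds to `∀ y, ValidVar ls y`.
def ValidVar (ls : List (VLabel Sig)) (y : ℕ) : Prop :=
  ls.count (VLabel.openv y) ≤ 1 ∧ ls.count (VLabel.closev y) ≤ 1 ∧
    ((VLabel.openv y) ∈ ls ↔ (VLabel.closev y) ∈ ls) ∧
    ∀ i j : ℕ, ls[i]? = some (VLabel.openv y) → ls[j]? = some (VLabel.closev y) →
      posAt ls i ≤ posAt ls j

theorem ValidVar.numVarLabels_eq (h : ValidVar ls x) :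
    numVarLabels x ls = 0 ∨ numVarLabels x ls = 2 := by
  obtain ⟨ho, hc, hoc, -⟩ := h
  rw [numVarLabels_eq_count_add_count]
  by_cases hm : VLabel.openv x ∈ ls
  · have := List.count_pos_iff.mpr hm
    have := List.count_pos_iff.mpr (hoc.mp hm)
    omega
  · rw [List.count_eq_zero.mpr hm, List.count_eq_zero.mpr (mt hoc.mpr hm)]
    simp

theorem collapseVar_eq_openv_iff (hy : y ≠ x) (l : VLabel Sig) :
    collapseVar x l = .openv y ↔ l = .openv y :=
  collapseVar_eq_iff (l' := .openv y) (by simpa [labelVars] using hy.symm)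

theorem collapseVar_eq_closev_iff (hy : y ≠ x) (l : VLabel Sig) :
    collapseVar x l = .closev y ↔ l = .closev y :=
  collapseVar_eq_iff (l' := .closev y) (by simpa [labelVars] using hy.symm)

theorem validVar_map_collapseVar (hy : y ≠ x) :
    ValidVar (ls.map (collapseVar x)) y ↔ ValidVar ls y := by
  have ho := collapseVar_eq_openv_iff (Sig := Sig) hy
  have hc := collapseVar_eq_closev_iff (Sig := Sig) hy
  simp only [ValidVar, count_map_of_fiber_eq ho, count_map_of_fiber_eq hc,
    mem_map_of_fiber_eq ho, mem_map_of_fiber_eq hc, getElem?_map_eq_some_of_fiber_eq ho,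
    getElem?_map_eq_some_of_fiber_eq hc, posAt_map_collapseVar]

theorem runMapping_map_collapseVar (hy : y ≠ x) :
    runMapping (ls.map (collapseVar x)) y = runMapping ls y := by
  have ho := collapseVar_eq_openv_iff (Sig := Sig) hy
  have hc := collapseVar_eq_closev_iff (Sig := Sig) hy
  simp only [runMapping, mem_map_of_fiber_eq ho, idxOf_map_of_fiber_eq ho,
    idxOf_map_of_fiber_eq hc, posAt_map_collapseVar]

theorem validVar_of_eq_append (hu : VarFree x u) (hv : VarFree x v) (hw : VarFree x w)
    (hls : ls = u ++ .openv x :: (v ++ .closev x :: w)) : ValidVar ls x := by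
  subst hls
  have := hu.openv_not_mem; have := hu.closev_not_mem; have := hv.openv_not_mem
  have := hv.closev_not_mem; have := hw.openv_not_mem; have := hw.closev_not_mem
  refine ⟨by simp [List.count_eq_zero.mpr, *], by simp [List.count_eq_zero.mpr, *],
    by simp, fun i j hi hj => posAt_mono _ ?_⟩
  rw [append_cons_append_cons] at hj
  have hi' := eq_length_of_getElem?_append_cons_eq_some hi (by simp [*]) (by simp [*])
  have hj' := eq_length_of_getElem?_append_cons_eq_some hj (by simp [*]) (by simp [*])
  simp [hi', hj']

end Validity

section Normal

variable {x : ℕ} {ls ls₀ u v w : List (VLabel Sig)}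

theorem runMapping_of_eq_append (hu : VarFree x u) (hv : VarFree x v)
    (hls : ls = u ++ .openv x :: (v ++ .closev x :: w)) :
    runMapping ls x = some (posAt ls u.length, posAt ls (u.length + v.length + 1)) := by
  have ho : ls.idxOf (.openv x) = u.length := hls ▸ idxOf_append_cons_of_not_mem hu.openv_not_mem
  have hc : ls.idxOf (.closev x) = u.length + v.length + 1 := by
    rw [hls, append_cons_append_cons, idxOf_append_cons_of_not_mem]
    · simp; omega
    · simp [hu.closev_not_mem, hv.closev_not_mem]
  have hmem : VLabel.openv x ∈ ls := by simp [hls]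
  simp only [runMapping, if_pos hmem, ho, hc]

theorem runMapping_of_eq_append_swap (hu : VarFree x u) (hv : VarFree x v)
    (hls : ls = u ++ .closev x :: (v ++ .openv x :: w)) (hvalid : ValidVar ls x) :
    runMapping ls x = some (posAt ls u.length, posAt ls (u.length + v.length + 1)) := by
  have hc : ls.idxOf (.closev x) = u.length := hls ▸ idxOf_append_cons_of_not_mem hu.closev_not_mem
  have ho : ls.idxOf (.openv x) = u.length + v.length + 1 := by
    rw [hls, append_cons_append_cons, idxOf_append_cons_of_not_mem]
    · simp; omega
    · simp [hu.openv_not_mem, hv.openv_not_mem]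
  have hgo : ls[u.length + v.length + 1]? = some (.openv x) := by
    rw [hls, append_cons_append_cons, List.getElem?_append_right (by simp; omega)]
    simp
  have hgc : ls[u.length]? = some (.closev x) := by simp [hls]
  have hmem : VLabel.openv x ∈ ls := List.mem_of_getElem? hgo
  have heq : posAt ls (u.length + v.length + 1) = posAt ls u.length :=
    le_antisymm (hvalid.2.2.2 _ _ hgo hgc) (posAt_mono ls (by omega))
  simp only [runMapping, if_pos hmem, ho, hc, heq]

theorem posAt_eq_of_map_collapseVar_eq
    (h : ls₀.map (collapseVar x) = ls.map (collapseVar x)) (k : ℕ) : posAt ls₀ k = posAt ls k := by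
  rw [← posAt_map_collapseVar (x := x), h, posAt_map_collapseVar]

theorem readWord_eq_of_map_collapseVar_eq
    (h : ls₀.map (collapseVar x) = ls.map (collapseVar x)) : readWord ls₀ = readWord ls := by
  rw [← readWord_map_collapseVar (x := x), h, readWord_map_collapseVar]

theorem validLabels_and_runMapping_eq_of_map_collapseVar_eq (hv₀ : ValidLabels ls₀)
    (hmap : ls₀.map (collapseVar x) = ls.map (collapseVar x))
    (hx : ValidVar ls x ∧ runMapping ls x = runMapping ls₀ x) :
    ValidLabels ls ∧ runMapping ls = runMapping ls₀ := by
  refine ⟨fun y => ?_, funext fun y => ?_⟩ <;> obtain rfl | hy := eq_or_ne y x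
  · exact hx.1
  · show ValidVar ls y
    rw [← validVar_map_collapseVar hy, ← hmap, validVar_map_collapseVar hy]
    exact hv₀ y
  · exact hx.2
  · rw [← runMapping_map_collapseVar hy, ← hmap, runMapping_map_collapseVar hy]

def NormalFor (x : ℕ) (ls : List (VLabel Sig)) : Prop :=
  VarFree x ls ∨ ∃ u v w, VarFree x u ∧ VarFree x v ∧ VarFree x w ∧
    ls = u ++ .openv x :: (v ++ .closev x :: w)

theorem NormalFor.validLabels_and_runMapping_eq (hn : NormalFor x ls) (hv₀ : ValidLabels ls₀)
    (hmap : ls₀.map (collapseVar x) = ls.map (collapseVar x)) :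
    ValidLabels ls ∧ runMapping ls = runMapping ls₀ := by
  rcases hn with hls | ⟨u, v, w, hu, hv, hw, rfl⟩
  · rw [map_collapseVar_of_varFree hls] at hmap
    obtain rfl := eq_of_map_collapseVar_eq hls hmap
    exact ⟨hv₀, rfl⟩
  refine validLabels_and_runMapping_eq_of_map_collapseVar_eq hv₀ hmap
    ⟨validVar_of_eq_append hu hv hw rfl, ?_⟩
  have hpos := posAt_eq_of_map_collapseVar_eq hmap
  have himage : (u ++ .openv x :: (v ++ .closev x :: w)).map (collapseVar x)
      = u ++ .openv x :: (v ++ .openv x :: w) := by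
    simp [map_collapseVar_of_varFree, hu, hv, hw]
  rw [himage] at hmap
  obtain ⟨u₀, r, rfl, hu₀, hr⟩ := List.map_eq_append_iff.mp hmap
  obtain ⟨a, r', rfl, ha, hr'⟩ := List.map_eq_cons_iff.mp hr
  obtain ⟨v₀, r'', rfl, hv₀', hr''⟩ := List.map_eq_append_iff.mp hr'
  obtain ⟨b, w₀, rfl, hb, hw₀⟩ := List.map_eq_cons_iff.mp hr''
  obtain rfl := eq_of_map_collapseVar_eq hu hu₀
  obtain rfl := eq_of_map_collapseVar_eq hv hv₀'
  obtain rfl := eq_of_map_collapseVar_eq hw hw₀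
  rcases mem_labelVars_iff.mp (collapseVar_eq_openv_self_iff.mp ha) with rfl | rfl <;>
    rcases mem_labelVars_iff.mp (collapseVar_eq_openv_self_iff.mp hb) with rfl | rfl
  · exact absurd (hv₀ x).1 (by simp; omega)
  · rfl
  · rw [runMapping_of_eq_append hu hv rfl, runMapping_of_eq_append_swap hu hv rfl (hv₀ x),
      hpos, hpos]
  · exact absurd (hv₀ x).2.1 (by simp; omega)

end Normal

section Split

variable {A : VA Sig} {x N p q : ℕ} {l : VLabel Sig}

theorem src_mem_statesOf (h : (p, l, q) ∈ A.δ) : p ∈ statesOf A := by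
  unfold statesOf
  exact Finset.mem_insert_of_mem (Finset.mem_union_left _
    (Finset.mem_union_right _ (Finset.mem_image.mpr ⟨_, h, rfl⟩)))

theorem tgt_mem_statesOf (h : (p, l, q) ∈ A.δ) : q ∈ statesOf A := by
  unfold statesOf
  exact Finset.mem_insert_of_mem (Finset.mem_union_right _ (Finset.mem_image.mpr ⟨_, h, rfl⟩))

theorem q0_mem_statesOf : A.q0 ∈ statesOf A :=
  Finset.mem_insert_self _ _

theorem mem_statesOf_of_mem_F (h : q ∈ A.F) : q ∈ statesOf A := by
  unfold statesOf
  exact Finset.mem_insert_of_mem (Finset.mem_union_left _ (Finset.mem_union_left _ h))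

def splitTransitions (x N : ℕ) (t : ℕ × VLabel Sig × ℕ) : Finset (ℕ × VLabel Sig × ℕ) :=
  if x ∈ labelVars t.2.1 then {(t.1, .openv x, t.2.2 + N), (t.1 + N, .closev x, t.2.2 + N)}
  else {t, (t.1 + N, t.2.1, t.2.2 + N)}

def splitVA (A : VA Sig) (x N : ℕ) : VA Sig :=
  ⟨A.q0, A.F ∪ A.F.image (· + N), A.δ.biUnion (splitTransitions x N)⟩

theorem mem_splitVA_δ {t : ℕ × VLabel Sig × ℕ} :
    t ∈ (splitVA A x N).δ ↔ ∃ p l q, (p, l, q) ∈ A.δ ∧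
      (x ∉ labelVars l ∧ (t = (p, l, q) ∨ t = (p + N, l, q + N)) ∨
       x ∈ labelVars l ∧ (t = (p, .openv x, q + N) ∨ t = (p + N, .closev x, q + N))) := by
  simp only [splitVA, Finset.mem_biUnion, Prod.exists, splitTransitions]
  refine exists_congr fun p => exists_congr fun l => exists_congr fun q =>
    and_congr_right fun _ => ?_
  split_ifs with hl <;> simp [hl]

theorem splitVA_transition_of_not_mem (h : (p, l, q) ∈ A.δ) (hl : x ∉ labelVars l) :
    (p, l, q) ∈ (splitVA A x N).δ ∧ (p + N, l, q + N) ∈ (splitVA A x N).δ :=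
  ⟨mem_splitVA_δ.mpr ⟨p, l, q, h, .inl ⟨hl, .inl rfl⟩⟩,
    mem_splitVA_δ.mpr ⟨p, l, q, h, .inl ⟨hl, .inr rfl⟩⟩⟩

theorem splitVA_transition_of_mem (h : (p, l, q) ∈ A.δ) (hl : x ∈ labelVars l) :
    (p, .openv x, q + N) ∈ (splitVA A x N).δ ∧ (p + N, .closev x, q + N) ∈ (splitVA A x N).δ :=
  ⟨mem_splitVA_δ.mpr ⟨p, l, q, h, .inr ⟨hl, .inl rfl⟩⟩,
    mem_splitVA_δ.mpr ⟨p, l, q, h, .inr ⟨hl, .inr rfl⟩⟩⟩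

theorem splitVA_transition_mod (hN : ∀ s ∈ statesOf A, s < N)
    (h : (p, l, q) ∈ (splitVA A x N).δ) :
    ∃ l₀, (p % N, l₀, q % N) ∈ A.δ ∧ collapseVar x l₀ = collapseVar x l := by
  obtain ⟨p₀, l₀, q₀, h₀, hcase⟩ := mem_splitVA_δ.mp h
  have hp := Nat.mod_eq_of_lt (hN _ (src_mem_statesOf h₀))
  have hq := Nat.mod_eq_of_lt (hN _ (tgt_mem_statesOf h₀))
  refine ⟨l₀, ?_⟩
  rcases hcase with ⟨hl, h | h⟩ | ⟨hl, h | h⟩ <;> simp only [Prod.mk.injEq] at h <;>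
    obtain ⟨rfl, rfl, rfl⟩ := h <;> simp only [hp, hq, h₀, Nat.add_mod_right, true_and]
  all_goals simp [collapseVar_eq_openv_self_iff.mpr hl]

theorem splitVA_transition_of_le (hN : ∀ s ∈ statesOf A, s < N)
    (h : (p, l, q) ∈ (splitVA A x N).δ) (hp : N ≤ p) : N ≤ q ∧ l ≠ .openv x := by
  obtain ⟨p₀, l₀, q₀, h₀, hcase⟩ := mem_splitVA_δ.mp h
  have := hN _ (src_mem_statesOf h₀)
  rcases hcase with ⟨hl, h | h⟩ | ⟨hl, h | h⟩ <;> simp only [Prod.mk.injEq] at h <;>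
    obtain ⟨rfl, rfl, rfl⟩ := h
  · omega
  · exact ⟨by omega, fun h => hl (h ▸ by simp [labelVars])⟩
  · omega
  · simp

theorem splitVA_transition_of_lt (hN : ∀ s ∈ statesOf A, s < N)
    (h : (p, l, q) ∈ (splitVA A x N).δ) (hp : p < N) :
    (q < N ∧ x ∉ labelVars l) ∨ (N ≤ q ∧ l = .openv x) := by
  obtain ⟨p₀, l₀, q₀, h₀, hcase⟩ := mem_splitVA_δ.mp h
  have := hN _ (tgt_mem_statesOf h₀)
  rcases hcase with ⟨hl, h | h⟩ | ⟨hl, h | h⟩ <;> simp only [Prod.mk.injEq] at h <;>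
    obtain ⟨rfl, rfl, rfl⟩ := h
  · exact .inl ⟨this, hl⟩
  · omega
  · exact .inr ⟨by omega, rfl⟩
  · omega

end Split

section Paths

variable {A : VA Sig} {x N s t : ℕ} {ls : List (VLabel Sig)}

theorem VA.PathFrom.append {p m r : ℕ} {l₁ l₂ : List (VLabel Sig)} (h₁ : A.PathFrom p l₁ m)
    (h₂ : A.PathFrom m l₂ r) : A.PathFrom p (l₁ ++ l₂) r := by
  induction h₁ with
  | nil => exact h₂
  | cons h _ ih => exact .cons h (ih h₂)

theorem VA.PathFrom.exists_of_append {p r : ℕ} {l₁ l₂ : List (VLabel Sig)}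
    (h : A.PathFrom p (l₁ ++ l₂) r) : ∃ m, A.PathFrom p l₁ m ∧ A.PathFrom m l₂ r := by
  induction l₁ generalizing p with
  | nil => exact ⟨p, .nil p, h⟩
  | cons l l₁ ih =>
    cases h with
    | cons ht h =>
      obtain ⟨m, h₁, h₂⟩ := ih h
      exact ⟨m, .cons ht h₁, h₂⟩

theorem VA.PathFrom.splitVA (h : A.PathFrom s ls t) (hls : VarFree x ls) :
    (splitVA A x N).PathFrom s ls t ∧ (splitVA A x N).PathFrom (s + N) ls (t + N) := by
  induction h with
  | nil q => exact ⟨.nil q, .nil (q + N)⟩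
  | cons ht _ ih =>
    obtain ⟨h₁, h₂⟩ := ih fun l hl => hls l (List.mem_cons_of_mem _ hl)
    obtain ⟨ht₁, ht₂⟩ := splitVA_transition_of_not_mem ht (hls _ List.mem_cons_self)
    exact ⟨.cons ht₁ h₁, .cons ht₂ h₂⟩

theorem splitVA_path_mod (hN : ∀ s ∈ statesOf A, s < N) (h : (splitVA A x N).PathFrom s ls t) :
    ∃ ls₀, A.PathFrom (s % N) ls₀ (t % N) ∧ ls₀.map (collapseVar x) = ls.map (collapseVar x) := by
  induction h with
  | nil q => exact ⟨[], .nil _, rfl⟩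
  | cons ht _ ih =>
    obtain ⟨l₀, ht₀, hl₀⟩ := splitVA_transition_mod hN ht
    obtain ⟨ls₀, h₀, hls₀⟩ := ih
    exact ⟨l₀ :: ls₀, .cons ht₀ h₀, by simp [hl₀, hls₀]⟩

theorem splitVA_path_of_le (hN : ∀ s ∈ statesOf A, s < N) (h : (splitVA A x N).PathFrom s ls t)
    (hs : N ≤ s) : N ≤ t ∧ .openv x ∉ ls := by
  induction h with
  | nil q => exact ⟨hs, List.not_mem_nil⟩
  | cons ht _ ih =>
    obtain ⟨hq, hl⟩ := splitVA_transition_of_le hN ht hs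
    obtain ⟨ht', hls⟩ := ih hq
    exact ⟨ht', by simp [Ne.symm hl, hls]⟩

theorem splitVA_path_of_lt (hN : ∀ s ∈ statesOf A, s < N) (h : (splitVA A x N).PathFrom s ls t)
    (hs : s < N) : (t < N ∧ VarFree x ls) ∨
      (N ≤ t ∧ ∃ u v, ls = u ++ .openv x :: v ∧ VarFree x u ∧ .openv x ∉ v) := by
  induction h with
  | nil q => exact .inl ⟨hs, fun _ h => absurd h List.not_mem_nil⟩
  | @cons p q r l ls ht htail ih =>
    rcases splitVA_transition_of_lt hN ht hs with ⟨hq, hl⟩ | ⟨hq, rfl⟩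
    · rcases ih hq with ⟨hr, hls⟩ | ⟨hr, u, v, rfl, hu, hv⟩
      · exact .inl ⟨hr, by simpa [VarFree, hl] using hls⟩
      · refine .inr ⟨hr, l :: u, v, rfl, by simpa [VarFree, hl] using hu, hv⟩
    · obtain ⟨hr, hls⟩ := splitVA_path_of_le hN htail hq
      exact .inr ⟨hr, [], ls, rfl, fun _ h => absurd h List.not_mem_nil, hls⟩

end Paths

section Semantics

variable {A : VA Sig} {x N : ℕ} {ls ls₀ : List (VLabel Sig)}

theorem splitVA_F_mod (hN : ∀ s ∈ statesOf A, s < N) {f : ℕ} (h : f ∈ (splitVA A x N).F) :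
    f % N ∈ A.F := by
  rcases Finset.mem_union.mp h with h | h
  · rwa [Nat.mod_eq_of_lt (hN _ (mem_statesOf_of_mem_F h))]
  · obtain ⟨f, hf, rfl⟩ := Finset.mem_image.mp h
    rwa [Nat.add_mod_right, Nat.mod_eq_of_lt (hN _ (mem_statesOf_of_mem_F hf))]

theorem exists_accepts_of_accepts_splitVA (hN : ∀ s ∈ statesOf A, s < N) (hseq : A.Sequential)
    (h : AcceptsWith (splitVA A x N) ls) :
    ∃ ls₀, AcceptsWith A ls₀ ∧ ls₀.map (collapseVar x) = ls.map (collapseVar x) ∧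
      NormalFor x ls := by
  obtain ⟨f, hpath, hf⟩ := h
  have hq0 : A.q0 < N := hN _ q0_mem_statesOf
  obtain ⟨ls₀, hpath₀, hmap⟩ := splitVA_path_mod hN hpath
  rw [show (splitVA A x N).q0 % N = A.q0 from Nat.mod_eq_of_lt hq0] at hpath₀
  have hacc : AcceptsWith A ls₀ := ⟨_, hpath₀, splitVA_F_mod hN hf⟩
  refine ⟨ls₀, hacc, hmap, ?_⟩
  rcases splitVA_path_of_lt hN hpath hq0 with ⟨-, hls⟩ | ⟨-, u, v, rfl, hu, hv⟩
  · exact .inl hls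
  have hcount : numVarLabels x v = 0 + 1 := by
    have h02 := ValidVar.numVarLabels_eq (hseq ls₀ hacc x)
    rw [← numVarLabels_map_collapseVar, hmap, numVarLabels_map_collapseVar] at h02
    rw [numVarLabels_append, numVarLabels_eq_zero_iff.mpr hu, numVarLabels_openv_cons] at h02
    omega
  obtain ⟨v₁, b, v₂, rfl, hv₁, hb, hv₂⟩ := exists_eq_append_cons_of_countP_eq_succ hcount
  obtain rfl : b = .closev x := by
    rcases mem_labelVars_iff.mp (by simpa using hb) with rfl | rfl
    · simp at hv
    · rfl
  exact .inr ⟨u, v₁, v₂, hu, fun l hl => by simpa using hv₁ l hl,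
    numVarLabels_eq_zero_iff.mp hv₂, rfl⟩

theorem exists_accepts_splitVA_of_accepts (h : AcceptsWith A ls₀) (hvalid : ValidLabels ls₀) :
    ∃ ls, AcceptsWith (splitVA A x N) ls ∧ ls₀.map (collapseVar x) = ls.map (collapseVar x) ∧
      NormalFor x ls := by
  obtain ⟨f, hpath, hf⟩ := h
  rcases ValidVar.numVarLabels_eq (hvalid x) with h0 | h2
  · have hfree := numVarLabels_eq_zero_iff.mp h0
    exact ⟨ls₀, ⟨f, (hpath.splitVA hfree).1, Finset.mem_union_left _ hf⟩, rfl, .inl hfree⟩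
  obtain ⟨u, a, v, b, w, rfl, hu, hv, hw, ha, hb⟩ := exists_eq_append_of_numVarLabels_eq_two h2
  obtain ⟨m₁, hpu, hrest⟩ := hpath.exists_of_append
  cases hrest with | cons hta hrest =>
  obtain ⟨m₂, hpv, hrest⟩ := hrest.exists_of_append
  cases hrest with | cons htb hpw =>
  refine ⟨u ++ .openv x :: (v ++ .closev x :: w),
    ⟨f + N, ?_, Finset.mem_union_right _ (Finset.mem_image_of_mem _ hf)⟩, ?_,
    .inr ⟨u, v, w, hu, hv, hw, rfl⟩⟩
  · exact (hpu.splitVA hu).1.append <| .cons (splitVA_transition_of_mem hta ha).1 <|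
      (hpv.splitVA hv).2.append <| .cons (splitVA_transition_of_mem htb hb).2 (hpw.splitVA hw).2
  · simp [map_collapseVar_of_varFree, hu, hv, hw, collapseVar_eq_openv_self_iff.mpr ha,
      collapseVar_eq_openv_self_iff.mpr hb]

theorem splitVA_sequential (hN : ∀ s ∈ statesOf A, s < N) (hseq : A.Sequential) :
    (splitVA A x N).Sequential := fun _ h =>
  let ⟨ls₀, hacc, hmap, hn⟩ := exists_accepts_of_accepts_splitVA hN hseq h
  (hn.validLabels_and_runMapping_eq (hseq ls₀ hacc) hmap).1

theorem vaSem_splitVA (hN : ∀ s ∈ statesOf A, s < N) (hseq : A.Sequential) (d : List Sig) :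
    vaSem (splitVA A x N) d = vaSem A d := by
  ext μ
  constructor
  · rintro ⟨ls, hacc, rfl, -, rfl⟩
    obtain ⟨ls₀, hacc₀, hmap, hn⟩ := exists_accepts_of_accepts_splitVA hN hseq hacc
    have hvalid₀ := hseq ls₀ hacc₀
    exact ⟨ls₀, hacc₀, readWord_eq_of_map_collapseVar_eq hmap, hvalid₀,
      (hn.validLabels_and_runMapping_eq hvalid₀ hmap).2⟩
  · rintro ⟨ls₀, hacc₀, rfl, hvalid₀, rfl⟩
    obtain ⟨ls, hacc, hmap, hn⟩ := exists_accepts_splitVA_of_accepts hacc₀ hvalid₀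
    obtain ⟨hvalid, hμ⟩ := hn.validLabels_and_runMapping_eq hvalid₀ hmap
    exact ⟨ls, hacc, (readWord_eq_of_map_collapseVar_eq hmap).symm, hvalid, hμ.symm⟩

end Semantics

section SemiFunctional

variable {A : VA Sig} {x N : ℕ}

theorem semiFunctionalFor_splitVA_self (hN : ∀ s ∈ statesOf A, s < N) :
    SemiFunctionalFor (splitVA A x N) x := by
  rintro ⟨q, ls₁, ls₂, ⟨h₁, -⟩, ⟨h₂, -⟩, hc, ho⟩
  have hq0 : A.q0 < N := hN _ q0_mem_statesOf
  rcases splitVA_path_of_lt hN h₁ hq0 with ⟨-, hfree⟩ | ⟨hq, -⟩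
  · exact hfree.closev_not_mem hc
  rcases splitVA_path_of_lt hN h₂ hq0 with ⟨hq', -⟩ | ⟨-, u, v, rfl, -, -⟩
  · omega
  · exact ho (by simp)

theorem semiFunctionalFor_splitVA (hN : ∀ s ∈ statesOf A, s < N) {y : ℕ} (hy : y ≠ x)
    (h : SemiFunctionalFor A y) : SemiFunctionalFor (splitVA A x N) y := by
  rintro ⟨q, ls₁, ls₂, ⟨h₁, ls', f, h', hf⟩, ⟨h₂, -⟩, hc, ho⟩
  have hq0 : (splitVA A x N).q0 % N = A.q0 := Nat.mod_eq_of_lt (hN _ q0_mem_statesOf)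
  obtain ⟨ls₁₀, h₁₀, hmap₁⟩ := splitVA_path_mod hN h₁
  obtain ⟨ls₂₀, h₂₀, hmap₂⟩ := splitVA_path_mod hN h₂
  obtain ⟨ls'₀, h'₀, -⟩ := splitVA_path_mod hN h'
  rw [hq0] at h₁₀ h₂₀
  have hcont : ∃ ls' qf, A.PathFrom (q % N) ls' qf ∧ qf ∈ A.F :=
    ⟨ls'₀, _, h'₀, splitVA_F_mod hN hf⟩
  have hmemc := mem_map_of_fiber_eq (collapseVar_eq_closev_iff (Sig := Sig) hy)
  have hmemo := mem_map_of_fiber_eq (collapseVar_eq_openv_iff (Sig := Sig) hy)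
  refine h ⟨q % N, ls₁₀, ls₂₀, ⟨h₁₀, hcont⟩, ⟨h₂₀, hcont⟩, ?_, ?_⟩
  · rwa [← hmemc, hmap₁, hmemc]
  · rwa [← hmemo, hmap₂, hmemo]

end SemiFunctional

section Size

variable {A : VA Sig} {x N : ℕ}

theorem card_splitTransitions_le (t : ℕ × VLabel Sig × ℕ) : (splitTransitions x N t).card ≤ 2 := by
  unfold splitTransitions
  split_ifs <;> exact Finset.card_le_two

theorem card_splitVA_δ_le : (splitVA A x N).δ.card ≤ 2 * A.δ.card :=
  calc (splitVA A x N).δ.card ≤ ∑ t ∈ A.δ, (splitTransitions x N t).card := Finset.card_biUnion_le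
    _ ≤ ∑ _t ∈ A.δ, 2 := Finset.sum_le_sum fun t _ => card_splitTransitions_le t
    _ = 2 * A.δ.card := by rw [Finset.sum_const, smul_eq_mul, mul_comm]

theorem statesOf_splitVA_subset :
    statesOf (splitVA A x N) ⊆ statesOf A ∪ (statesOf A).image (· + N) := by
  have hδ : ∀ t ∈ (splitVA A x N).δ, t.1 ∈ statesOf A ∪ (statesOf A).image (· + N) ∧
      t.2.2 ∈ statesOf A ∪ (statesOf A).image (· + N) := by
    intro t ht
    obtain ⟨p, l, q, h, hcase⟩ := mem_splitVA_δ.mp ht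
    have hp := src_mem_statesOf h
    have hq := tgt_mem_statesOf h
    rcases hcase with ⟨-, rfl | rfl⟩ | ⟨-, rfl | rfl⟩ <;> simp [hp, hq]
  simp only [statesOf, Finset.insert_subset_iff, Finset.union_subset_iff, Finset.image_subset_iff]
  refine ⟨?_, ⟨?_, fun t ht => (hδ t ht).1⟩, fun t ht => (hδ t ht).2⟩
  · exact Finset.mem_union_left _ q0_mem_statesOf
  · intro f hf
    rcases Finset.mem_union.mp hf with hf | hf
    · exact Finset.mem_union_left _ (mem_statesOf_of_mem_F hf)
    · obtain ⟨f₀, hf₀, rfl⟩ := Finset.mem_image.mp hf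
      exact Finset.mem_union_right _ (Finset.mem_image_of_mem _ (mem_statesOf_of_mem_F hf₀))

theorem card_statesOf_splitVA_le :
    (statesOf (splitVA A x N)).card ≤ 2 * (statesOf A).card :=
  calc (statesOf (splitVA A x N)).card
      ≤ (statesOf A ∪ (statesOf A).image (· + N)).card :=
        Finset.card_le_card statesOf_splitVA_subset
    _ ≤ (statesOf A).card + ((statesOf A).image (· + N)).card := Finset.card_union_le _ _
    _ ≤ 2 * (statesOf A).card := by
      have := Finset.card_image_le (s := statesOf A) (f := (· + N))
      omega

end Size

theorem statement2_general (A : VA Sig) (Y : Finset ℕ) (x : ℕ)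
    (hseq : A.Sequential) (hsf : SemiFunctionalForSet A Y)
    (hxY : x ∉ Y) :
    ∃ A' : VA Sig, A'.Sequential ∧ (∀ d : List Sig, vaSem A' d = vaSem A d) ∧
      SemiFunctionalForSet A' (insert x Y) ∧
      (statesOf A').card ≤ 2 * (statesOf A).card ∧ A'.δ.card ≤ 2 * A.δ.card := by
  have hN : ∀ s ∈ statesOf A, s < (statesOf A).sup id + 1 :=
    fun s hs => Nat.lt_succ_of_le (Finset.le_sup (f := id) hs)
  refine ⟨splitVA A x _, splitVA_sequential hN hseq, vaSem_splitVA hN hseq, ?_,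
    card_statesOf_splitVA_le, card_splitVA_δ_le⟩
  intro y hy
  rcases Finset.mem_insert.mp hy with rfl | hy
  · exact semiFunctionalFor_splitVA_self hN
  · exact semiFunctionalFor_splitVA hN (ne_of_mem_of_not_mem hy hxY) (hsf y hy)

theorem statement2 (A : VA Sig) (Y : Finset ℕ) (x : ℕ)
    (hseq : A.Sequential) (hY : Y ⊆ varsOf A) (hsf : SemiFunctionalForSet A Y)
    (hx : x ∈ varsOf A) (hxY : x ∉ Y) :
    ∃ A' : VA Sig, A'.Sequential ∧ (∀ d : List Sig, vaSem A' d = vaSem A d) ∧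
      SemiFunctionalForSet A' (insert x Y) ∧
      (statesOf A').card ≤ 2 * (statesOf A).card ∧ A'.δ.card ≤ 2 * A.δ.card :=
  statement2_general A Y x hseq hsf hxY

end Spanners
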